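/- arXiv:2512.06458 — 4 statements merged into one kernel-verified Lean document; each statement's English description precedes it below -/
import Mathlib

section
/- Let P be a probability distribution on a finite set S with P(x) > 0 for all x in the support. Then the expectation over x drawn from P of (log(1/P(x)))² is at most (log |S|)² + 2, where log denotes the natural logarithm. -/
open Finset

lemma concave_plogsq : ConcaveOn ℝ (Set.Ioc 0 (Real.exp (-1)))
    (fun p : ℝ => p * (Real.log p) ^ 2) := by
  apply concaveOn_of_hasDerivWithinAt2_nonpos (convex_Ioc _ _)
    (f' := fun p => (Real.log p) ^ 2 + 2 * Real.log p)
    (f'' := fun p => (2 * Real.log p + 2) / p)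
  · apply ContinuousOn.mul continuousOn_id
    exact (Real.continuousOn_log.mono (fun x hx => ne_of_gt hx.1)).pow 2
  · intro x hx
    rw [interior_Ioc] at hx
    have hx0 : x ≠ 0 := ne_of_gt hx.1
    have h : HasDerivAt (fun p : ℝ => p * (Real.log p) ^ 2)
        (1 * (Real.log x) ^ 2 + x * (2 * Real.log x ^ 1 * x⁻¹)) x :=
      (hasDerivAt_id x).mul ((Real.hasDerivAt_log hx0).pow 2)
    have h' : 1 * (Real.log x) ^ 2 + x * (2 * Real.log x ^ 1 * x⁻¹)
        = (Real.log x) ^ 2 + 2 * Real.log x := by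
      field_simp
    rw [h'] at h
    exact h.hasDerivWithinAt
  · intro x hx
    rw [interior_Ioc] at hx
    have hx0 : x ≠ 0 := ne_of_gt hx.1
    have h : HasDerivAt (fun p : ℝ => (Real.log p) ^ 2 + 2 * Real.log p)
        (2 * Real.log x ^ 1 * x⁻¹ + 2 * x⁻¹) x :=
      ((Real.hasDerivAt_log hx0).pow 2).add ((Real.hasDerivAt_log hx0).const_mul 2)
    have h' : 2 * Real.log x ^ 1 * x⁻¹ + 2 * x⁻¹ = (2 * Real.log x + 2) / x := by
      field_simp
    rw [h'] at h
    exact h.hasDerivWithinAt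
  · intro x hx
    rw [interior_Ioc] at hx
    have hlog : Real.log x < -1 := by
      have := Real.log_lt_log hx.1 hx.2
      rwa [Real.log_exp] at this
    have : 2 * Real.log x + 2 ≤ 0 := by linarith
    exact div_nonpos_of_nonpos_of_nonneg this hx.1.le

set_option maxHeartbeats 1000000 in
/-- For a fully supported distribution `P` on a finite set `S`,
`E_{x∼P}[(log(1/P x))²] ≤ (log |S|)² + 2`. -/
theorem expected_log_sq_le {α : Type*} [Fintype α] (P : α → ℝ)
    (hP0 : ∀ x, 0 < P x) (hP1 : ∑ x, P x = 1) :
    ∑ x, P x * (Real.log (1 / P x)) ^ 2 ≤ (Real.log (Fintype.card α)) ^ 2 + 2 := by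
  classical
  have hne : Nonempty α := by
    by_contra h
    rw [not_nonempty_iff] at h
    rw [Finset.univ_eq_empty, Finset.sum_empty] at hP1
    norm_num at hP1
  have hn1 : (1 : ℝ) ≤ (Fintype.card α : ℝ) := by
    exact_mod_cast Fintype.card_pos
  set L := Real.log (Fintype.card α) with hLdef
  have hL0 : 0 ≤ L := Real.log_nonneg hn1
  have hrw : ∀ x, (Real.log (1 / P x)) ^ 2 = (Real.log (P x)) ^ 2 := by
    intro x; rw [one_div, Real.log_inv]; ring
  simp_rw [hrw]
  set A := Finset.univ.filter (fun x => P x ≤ Real.exp (-1)) with hAdef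
  set B := Finset.univ.filter (fun x => ¬ P x ≤ Real.exp (-1)) with hBdef
  have hsplit : ∀ f : α → ℝ, ∑ x, f x = ∑ x ∈ A, f x + ∑ x ∈ B, f x := fun f =>
    (Finset.sum_filter_add_sum_filter_not _ _ f).symm
  have hPle1 : ∀ x, P x ≤ 1 := by
    intro x
    rw [← hP1]
    exact Finset.single_le_sum (fun i _ => (hP0 i).le) (Finset.mem_univ x)
  set W := ∑ x ∈ A, P x with hWdef
  have hWB : ∑ x ∈ B, P x = 1 - W := by
    have := hsplit P
    rw [hP1] at this
    linarith
  have hBnonneg : 0 ≤ ∑ x ∈ B, P x :=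
    Finset.sum_nonneg (fun i _ => (hP0 i).le)
  have hW1 : W ≤ 1 := by linarith
  -- bound on B part
  have hBsum : ∑ x ∈ B, P x * (Real.log (P x)) ^ 2 ≤ 1 - W := by
    rw [← hWB]
    apply Finset.sum_le_sum
    intro x hx
    have hx' : Real.exp (-1) < P x := by
      rw [hBdef, Finset.mem_filter] at hx
      exact lt_of_not_ge hx.2
    have h1 : Real.log (P x) ≤ 0 := Real.log_nonpos (hP0 x).le (hPle1 x)
    have h2 : -1 < Real.log (P x) := by
      have := Real.log_lt_log (Real.exp_pos _) hx'
      rwa [Real.log_exp] at this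
    have h3 : (Real.log (P x)) ^ 2 ≤ 1 := by nlinarith
    nlinarith [hP0 x]
  rw [hsplit (fun x => P x * (Real.log (P x)) ^ 2)]
  by_cases hAne : A.Nonempty
  · -- Jensen on A
    have hW0 : 0 < W := Finset.sum_pos (fun i _ => hP0 i) hAne
    set c := (A.card : ℝ) with hcdef
    have hc1 : (1 : ℝ) ≤ c := by
      have h := Finset.card_pos.mpr hAne
      rw [hcdef]; exact_mod_cast h
    have hc0 : 0 < c := by linarith
    have hwsum : ∑ _x ∈ A, c⁻¹ = 1 := by
      rw [Finset.sum_const, nsmul_eq_mul, ← hcdef, mul_inv_cancel₀ (ne_of_gt hc0)]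
    have hmem : ∀ x ∈ A, P x ∈ Set.Ioc 0 (Real.exp (-1)) := by
      intro x hx
      rw [hAdef, Finset.mem_filter] at hx
      exact ⟨hP0 x, hx.2⟩
    have hjen := concave_plogsq.le_map_sum (t := A) (w := fun _ => c⁻¹) (p := P)
      (fun i _ => by positivity) hwsum hmem
    have hpt : ∑ x ∈ A, c⁻¹ • P x = c⁻¹ * W := by
      rw [← Finset.smul_sum, smul_eq_mul]
    rw [hpt] at hjen
    have hAsum : ∑ x ∈ A, P x * (Real.log (P x)) ^ 2
        ≤ c * ((c⁻¹ * W) * (Real.log (c⁻¹ * W)) ^ 2) := by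
      have h2 : ∑ x ∈ A, c⁻¹ • (P x * (Real.log (P x)) ^ 2)
          = c⁻¹ * ∑ x ∈ A, P x * (Real.log (P x)) ^ 2 := by
        rw [← Finset.smul_sum, smul_eq_mul]
      rw [h2] at hjen
      calc ∑ x ∈ A, P x * (Real.log (P x)) ^ 2
          = c * (c⁻¹ * ∑ x ∈ A, P x * (Real.log (P x)) ^ 2) := by
            field_simp
        _ ≤ c * ((c⁻¹ * W) * (Real.log (c⁻¹ * W)) ^ 2) := by
            apply mul_le_mul_of_nonneg_left hjen hc0.le
    have hlogsplit : Real.log (c⁻¹ * W) = Real.log W - Real.log c := by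
      rw [inv_mul_eq_div, Real.log_div (ne_of_gt hW0) (ne_of_gt hc0)]
    have hAsum2 : ∑ x ∈ A, P x * (Real.log (P x)) ^ 2
        ≤ W * (Real.log W - Real.log c) ^ 2 := by
      calc ∑ x ∈ A, P x * (Real.log (P x)) ^ 2
          ≤ c * ((c⁻¹ * W) * (Real.log (c⁻¹ * W)) ^ 2) := hAsum
        _ = W * (Real.log W - Real.log c) ^ 2 := by
            rw [hlogsplit]; field_simp
    set u := -Real.log W with hudef
    have hu0 : 0 ≤ u := by
      have := Real.log_nonpos hW0.le hW1
      linarith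
    have hLc0 : 0 ≤ Real.log c := Real.log_nonneg hc1
    have hLcL : Real.log c ≤ L := by
      apply Real.log_le_log hc0
      rw [hcdef]
      exact_mod_cast Finset.card_le_univ A
    have hsq : (Real.log W - Real.log c) ^ 2 ≤ (L + u) ^ 2 := by
      have h1 : Real.log W - Real.log c = -(Real.log c + u) := by
        rw [hudef]; ring
      rw [h1, neg_pow]
      have : (Real.log c + u) ^ 2 ≤ (L + u) ^ 2 := by
        apply pow_le_pow_left₀ (by linarith) (by linarith)
      simpa using this
    have hAsum3 : ∑ x ∈ A, P x * (Real.log (P x)) ^ 2 ≤ W * (L + u) ^ 2 := by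
      calc ∑ x ∈ A, P x * (Real.log (P x)) ^ 2
          ≤ W * (Real.log W - Real.log c) ^ 2 := hAsum2
        _ ≤ W * (L + u) ^ 2 := mul_le_mul_of_nonneg_left hsq hW0.le
    -- key analytic inequality : W * u^2 ≤ 1 - W^2
    have hWE : W = Real.exp (-u) := by
      rw [hudef, neg_neg, Real.exp_log hW0]
    have hkey : W * u ^ 2 ≤ 1 - W ^ 2 := by
      set E := Real.exp u with hEdef
      have hWEmul : W * E = 1 := by
        rw [hWE, hEdef, ← Real.exp_add]; simp
      have hq : 1 + u + u ^ 2 / 2 + u ^ 3 / 6 ≤ E := by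
        have := Real.sum_le_exp_of_nonneg hu0 4
        rw [Finset.sum_range_succ, Finset.sum_range_succ, Finset.sum_range_succ,
          Finset.sum_range_succ, Finset.sum_range_zero] at this
        norm_num [Nat.factorial] at this
        linarith [this]
      have hE1 : 1 ≤ E := Real.one_le_exp hu0
      have hstep : 1 ≤ E - u ^ 2 := by
        nlinarith [mul_nonneg hu0 (sq_nonneg (u - 3/2))]
      have hkeyE : u ^ 2 * E ≤ E ^ 2 - 1 := by nlinarith
      have hW0' : 0 ≤ W ^ 2 := sq_nonneg W
      nlinarith [mul_le_mul_of_nonneg_left hkeyE hW0', hWEmul, hW0.le]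
    -- finish
    have hu' : W = 1 → u = 0 := by
      intro hWeq
      rw [hudef, hWeq, Real.log_one, neg_zero]
    clear_value W c u L
    rcases eq_or_lt_of_le hW1 with hWeq | hWlt
    · have hu0' := hu' hWeq
      rw [hWeq] at hAsum3 hBsum
      rw [hu0'] at hAsum3
      nlinarith [hAsum3, hBsum, hL0]
    · nlinarith [hAsum3, hBsum, sq_nonneg ((1 - W) * L - W * u), hkey, hW0.le, hu0, hL0, hWlt]
  · rw [Finset.not_nonempty_iff_eq_empty] at hAne
    rw [hAne, Finset.sum_empty]
    have hW0 : W = 0 := by rw [hWdef, hAne, Finset.sum_empty]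
    rw [hW0] at hBsum
    nlinarith
end

section
/- Let P be a log-concave probability distribution on the integers, i.e., P(k)² ≥ P(k−1)·P(k+1) for all k. Then for every x with P(x) > 0, the tilt of P at x satisfies tilt_P(x) = max(P(x−1)/P(x), P(x+1)/P(x)). That is, the maxima in the definition of tilt are attained at the immediate neighbors y = x−1 and y = x+1. -/
open Finset

/-- The tilt of a distribution `P` on `ℤ` at a point `x`:
`sup` over `y < x` of `P y / P([y+1,x])` together with
`sup` over `y > x` of `P y / P([x,y-1])`. -/
noncomputable def tiltZ (P : ℤ → ℝ) (x : ℤ) : ℝ :=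
  sSup (((fun y => P y / ∑ t ∈ Finset.Icc (y + 1) x, P t) '' {y : ℤ | y < x}) ∪
        ((fun y => P y / ∑ t ∈ Finset.Icc x (y - 1), P t) '' {y : ℤ | x < y}))

/-- For a log-concave distribution on `ℤ`, the tilt at `x` is attained at the
immediate neighbors: `tilt_P(x) = max(P(x-1)/P(x), P(x+1)/P(x))`. -/
theorem tilt_logconcave_eq (P : ℤ → ℝ)
    (hpos : ∀ k, 0 < P k)
    (hlc : ∀ k : ℤ, P (k - 1) * P (k + 1) ≤ P k ^ 2)
    (x : ℤ) (hx : 0 < P x) :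
    tiltZ P x = max (P (x - 1) / P x) (P (x + 1) / P x) := by
  have hf : Monotone (fun k : ℤ => P (k - 1) / P k) := by
    apply monotone_int_of_le_succ
    intro k
    rw [div_le_div_iff₀ (hpos k) (hpos (k + 1))]
    simpa [sq] using hlc k
  have hg : Antitone (fun k : ℤ => P (k + 1) / P k) := by
    apply antitone_int_of_succ_le
    intro k
    rw [div_le_div_iff₀ (hpos (k + 1)) (hpos k)]
    have := hlc (k + 1)
    simp only [add_sub_cancel_right, sq] at this
    linarith [this]
  set S := (((fun y => P y / ∑ t ∈ Finset.Icc (y + 1) x, P t) '' {y : ℤ | y < x}) ∪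
        ((fun y => P y / ∑ t ∈ Finset.Icc x (y - 1), P t) '' {y : ℤ | x < y})) with hS
  have hmem1 : P (x - 1) / P x ∈ S := by
    apply Set.mem_union_left
    refine ⟨x - 1, by simp, ?_⟩
    simp [sub_add_cancel]
  have hmem2 : P (x + 1) / P x ∈ S := by
    apply Set.mem_union_right
    refine ⟨x + 1, by simp, ?_⟩
    simp [add_sub_cancel_right]
  have hub : ∀ z ∈ S, z ≤ max (P (x - 1) / P x) (P (x + 1) / P x) := by
    rintro z (⟨y, hy, rfl⟩ | ⟨y, hy, rfl⟩)
    · -- y < x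
      have h1 : y + 1 ≤ x := hy
      have hmemI : y + 1 ∈ Finset.Icc (y + 1) x := by simp [h1]
      have hs : P (y + 1) ≤ ∑ t ∈ Finset.Icc (y + 1) x, P t :=
        Finset.single_le_sum (fun t _ => (hpos t).le) hmemI
      have h2 : P y / ∑ t ∈ Finset.Icc (y + 1) x, P t ≤ P y / P (y + 1) := by
        gcongr
        · exact (hpos y).le
        · exact hpos (y + 1)
      have h3 : P y / P (y + 1) ≤ P (x - 1) / P x := by
        simpa using hf h1
      exact le_max_of_le_left (h2.trans h3)
    · -- x < y
      have h1 : x ≤ y - 1 := by have : x < y := hy; omega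
      have hmemI : y - 1 ∈ Finset.Icc x (y - 1) := by simp [h1]
      have hs : P (y - 1) ≤ ∑ t ∈ Finset.Icc x (y - 1), P t :=
        Finset.single_le_sum (fun t _ => (hpos t).le) hmemI
      have h2 : P y / ∑ t ∈ Finset.Icc x (y - 1), P t ≤ P y / P (y - 1) := by
        gcongr
        · exact (hpos y).le
        · exact hpos (y - 1)
      have h3 : P y / P (y - 1) ≤ P (x + 1) / P x := by
        simpa [sub_add_cancel] using hg h1
      exact le_max_of_le_right (h2.trans h3)
  have hbdd : BddAbove S := ⟨_, hub⟩
  unfold tiltZ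
  rw [← hS]
  apply le_antisymm
  · exact csSup_le ⟨_, hmem1⟩ hub
  · exact max_le (le_csSup hbdd hmem1) (le_csSup hbdd hmem2)
end

section
/- Let μ be a probability measure on ℝ and fix a ∈ ℝ. For β ≥ 0, let A(β) = [a − β, a + β], and let g(β) = μ(A(β)). Assume g is continuous with g(β) > 0 for β > 0 and lim_{β→0} g(β) = 0. Fix b > 0, sample X from μ conditioned on A(b), and set b' = inf{β : X ∈ A(β)} = |X − a|. Then the random variable U = μ(A(b'))/μ(A(b)) is uniformly distributed on [0,1]. -/
open MeasureTheory

/-- Tootsie-Pop key fact: sampling `X` from `μ` conditioned on the interval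
`A(b) = [a−b, a+b]`, the ratio `U = μ(A(|X−a|))/μ(A(b))` is uniform on `[0,1]`. -/
theorem nested_interval_ratio_uniform (μ : Measure ℝ) [IsProbabilityMeasure μ]
    (a b : ℝ) (hb : 0 < b)
    (g : ℝ → ℝ) (hg : ∀ β, g β = (μ (Set.Icc (a - β) (a + β))).toReal)
    (hgcont : Continuous g)
    (hgpos : ∀ β : ℝ, 0 < β → 0 < g β)
    (hg0 : Filter.Tendsto g (nhdsWithin 0 (Set.Ioi 0)) (nhds 0))
    (U : ℝ → ℝ) (hU : ∀ x, U x = g |x - a| / g b) :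
    Measure.map U ((μ (Set.Icc (a - b) (a + b)))⁻¹ • μ.restrict (Set.Icc (a - b) (a + b))) =
      volume.restrict (Set.Icc (0 : ℝ) 1) := by
  have hUeq : U = fun x => g |x - a| / g b := funext hU
  have hgb : 0 < g b := hgpos b hb
  set s : Set ℝ := Set.Icc (a - b) (a + b) with hs
  have hμs_ne_top : μ s ≠ ⊤ := measure_ne_top μ s
  have hμs_eq : μ s = ENNReal.ofReal (g b) := by
    rw [hg b, ENNReal.ofReal_toReal hμs_ne_top]
  have hμs_ne_zero : μ s ≠ 0 := by
    rw [hμs_eq]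
    simpa using hgb
  have hg00 : g 0 = 0 := by
    have h1 : Filter.Tendsto g (nhdsWithin 0 (Set.Ioi 0)) (nhds (g 0)) :=
      (hgcont.continuousAt).continuousWithinAt.tendsto
    exact tendsto_nhds_unique h1 hg0
  have hgmono : Monotone g := by
    intro x y hxy
    rw [hg x, hg y]
    exact ENNReal.toReal_mono (measure_ne_top μ _)
      (measure_mono (Set.Icc_subset_Icc (by linarith) (by linarith)))
  have hgnonneg : ∀ β, 0 ≤ g β := fun β => by rw [hg]; exact ENNReal.toReal_nonneg
  have hUcont : Continuous U := by
    rw [hUeq]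
    exact (hgcont.comp ((continuous_id.sub continuous_const).abs)).div_const _
  have hUmeas : Measurable U := hUcont.measurable
  set ν : Measure ℝ := (μ s)⁻¹ • μ.restrict s with hν
  haveI : IsProbabilityMeasure ν := by
    constructor
    rw [hν, Measure.smul_apply, Measure.restrict_apply_univ, smul_eq_mul,
      ENNReal.inv_mul_cancel hμs_ne_zero hμs_ne_top]
  haveI : IsProbabilityMeasure (Measure.map U ν) :=
    Measure.isProbabilityMeasure_map hUmeas.aemeasurable
  -- membership in s in terms of |x - a|
  have hmem : ∀ x : ℝ, x ∈ s ↔ |x - a| ≤ b := by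
    intro x
    rw [hs, Set.mem_Icc, abs_le]
    constructor <;> intro h <;> constructor <;> linarith [h.1, h.2]
  apply Measure.ext_of_Iic
  intro t
  rw [Measure.map_apply hUmeas measurableSet_Iic, hν, Measure.smul_apply,
    Measure.restrict_apply (hUmeas measurableSet_Iic), smul_eq_mul,
    Measure.restrict_apply measurableSet_Iic]
  rcases lt_or_ge t 0 with ht0 | ht0
  · have h1 : U ⁻¹' Set.Iic t ∩ s = ∅ := by
      ext x
      simp only [Set.mem_inter_iff, Set.mem_preimage, Set.mem_Iic, Set.mem_empty_iff_false,
        iff_false, not_and]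
      intro hx
      have : 0 ≤ U x := by rw [hU]; exact div_nonneg (hgnonneg _) hgb.le
      intro hxs
      linarith
    have h2 : Set.Iic t ∩ Set.Icc (0:ℝ) 1 = ∅ := by
      ext x
      simp only [Set.mem_inter_iff, Set.mem_Iic, Set.mem_Icc, Set.mem_empty_iff_false, iff_false]
      rintro ⟨hx, h1, h2⟩
      linarith
    rw [h1, h2, measure_empty, measure_empty, mul_zero]
  rcases le_or_gt t 1 with ht1 | ht1
  · -- main case 0 ≤ t ≤ 1
    have hcmem : t * g b ∈ Set.Icc (g 0) (g b) := by
      constructor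
      · rw [hg00]; exact mul_nonneg ht0 hgb.le
      · nlinarith
    obtain ⟨β₀, hβ₀mem, hβ₀⟩ := intermediate_value_Icc hb.le hgcont.continuousOn hcmem
    set S : Set ℝ := Set.Icc 0 b ∩ g ⁻¹' Set.Iic (t * g b) with hS
    have hScompact : IsCompact S := isCompact_Icc.inter_right (isClosed_Iic.preimage hgcont)
    have hβ₀S : β₀ ∈ S := ⟨hβ₀mem, by simp [hβ₀]⟩
    set β := sSup S with hβ
    have hβS : β ∈ S := hScompact.sSup_mem ⟨β₀, hβ₀S⟩
    have hβ₀le : β₀ ≤ β := le_csSup hScompact.bddAbove hβ₀S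
    have hgβ : g β = t * g b := le_antisymm hβS.2 (hβ₀ ▸ hgmono hβ₀le)
    have hβb : β ≤ b := hβS.1.2
    have hE : U ⁻¹' Set.Iic t ∩ s = Set.Icc (a - β) (a + β) := by
      ext x
      simp only [Set.mem_inter_iff, Set.mem_preimage, Set.mem_Iic]
      constructor
      · rintro ⟨hUx, hxs⟩
        have hxb : |x - a| ≤ b := (hmem x).mp hxs
        have hgx : g |x - a| ≤ t * g b := by
          rw [hU] at hUx
          exact (div_le_iff₀ hgb).mp hUx
        have hxS : |x - a| ∈ S := ⟨⟨abs_nonneg _, hxb⟩, hgx⟩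
        have : |x - a| ≤ β := le_csSup hScompact.bddAbove hxS
        rw [abs_le] at this
        rw [Set.mem_Icc]
        constructor <;> linarith [this.1, this.2]
      · intro hx
        rw [Set.mem_Icc] at hx
        have hxβ : |x - a| ≤ β := abs_le.mpr ⟨by linarith [hx.1], by linarith [hx.2]⟩
        constructor
        · rw [hU, div_le_iff₀ hgb]
          calc g |x - a| ≤ g β := hgmono hxβ
            _ = t * g b := hgβ
        · exact (hmem x).mpr (le_trans hxβ hβb)
    rw [hE]
    have hμE : μ (Set.Icc (a - β) (a + β)) = ENNReal.ofReal (t * g b) := by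
      rw [← hgβ, hg β, ENNReal.ofReal_toReal (measure_ne_top μ _)]
    have h2 : Set.Iic t ∩ Set.Icc (0:ℝ) 1 = Set.Icc 0 t := by
      ext x
      simp only [Set.mem_inter_iff, Set.mem_Iic, Set.mem_Icc]
      constructor
      · rintro ⟨h1, h2, h3⟩; exact ⟨h2, h1⟩
      · rintro ⟨h1, h2⟩; exact ⟨h2, h1, by linarith⟩
    rw [hμE, h2, hμs_eq, Real.volume_Icc, ENNReal.ofReal_mul ht0, ← mul_assoc,
      mul_comm ((ENNReal.ofReal (g b))⁻¹) (ENNReal.ofReal t), mul_assoc,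
      ENNReal.inv_mul_cancel (by simpa using hgb) ENNReal.ofReal_ne_top, mul_one]
    norm_num
  · -- case t > 1
    have h1 : U ⁻¹' Set.Iic t ∩ s = s := by
      apply Set.inter_eq_right.mpr
      intro x hxs
      have hxb : |x - a| ≤ b := (hmem x).mp hxs
      simp only [Set.mem_preimage, Set.mem_Iic]
      rw [hU]
      have : g |x - a| ≤ g b := hgmono hxb
      rw [div_le_iff₀ hgb]
      nlinarith
    have h2 : Set.Iic t ∩ Set.Icc (0:ℝ) 1 = Set.Icc 0 1 := by
      apply Set.inter_eq_right.mpr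
      intro x hx
      rw [Set.mem_Icc] at hx
      exact le_trans hx.2 ht1.le
    rw [h1, h2, ENNReal.inv_mul_cancel hμs_ne_zero hμs_ne_top, Real.volume_Icc]
    norm_num
end

section
/- Let λ ∼ (1/r)·Poisson(r·L) for integer r ≥ 1 (the average of r i.i.d. Poisson(L) variables, where L = log(1/p) for p ∈ (0,1)), and let ζ > 0. If r ≥ 2(L + log(1+ζ))·log(1/δ')/log²(1+ζ), then Pr( |λ − L| ≥ log(1+ζ) ) ≤ 2δ'. Consequently, with probability at least 1 − 2δ', the estimate e^{−λ} satisfies p/(1+ζ) ≤ e^{−λ} ≤ (1+ζ)·p. -/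
/-!
Here `r·λ` is a Poisson(m) variable with `m = rL`, and the event `|λ - L| ≥ log(1+ζ)` is
`|rλ - m| ≥ t` with `t = r·log(1+ζ)`. The Chernoff bound `Pr(X ∈ A) ≤ e^{-xc} E[e^{xX}]`, with
`E[e^{xX}] = exp(m(e^x - 1))`, taken at `x = t/(m+t)` for the upper tail and at `x = -t/m` for the
lower one, bounds each tail by `exp(-t²/(2(m+t)))`, which the lower bound on `r` makes `≤ δ'`.
Off the deviation event, exponentiating `|λ - log(1/p)| < log(1+ζ)` gives
`p/(1+ζ) ≤ e^{-λ} ≤ (1+ζ)p`.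
-/

open Real

noncomputable def poissonWeight (m : ℝ) (k : ℕ) : ℝ := exp (-m) * m ^ k / k.factorial

lemma poissonWeight_nonneg {m : ℝ} (hm : 0 ≤ m) (k : ℕ) : 0 ≤ poissonWeight m k := by
  unfold poissonWeight; positivity

lemma hasSum_exp_mul_poissonWeight (m x : ℝ) :
    HasSum (fun k : ℕ ↦ exp (x * k) * poissonWeight m k) (exp (m * (exp x - 1))) := by
  have h := (NormedSpace.expSeries_div_hasSum_exp (m * exp x)).mul_left (exp (-m))
  rw [← exp_eq_exp_ℝ, ← exp_add, neg_add_eq_sub, ← mul_sub_one] at h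
  have hterm (k : ℕ) :
      exp (x * k) * poissonWeight m k = exp (-m) * ((m * exp x) ^ k / k.factorial) := by
    rw [poissonWeight, mul_comm x, exp_nat_mul, mul_pow]
    ring
  simpa only [hterm] using h

lemma hasSum_poissonWeight (m : ℝ) : HasSum (poissonWeight m) 1 := by
  simpa using hasSum_exp_mul_poissonWeight m 0

lemma summable_ite_poissonWeight {m : ℝ} (hm : 0 ≤ m) (P : ℕ → Prop) [DecidablePred P] :
    Summable (fun k ↦ if P k then poissonWeight m k else 0) :=
  (hasSum_poissonWeight m).summable.of_nonneg_of_le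
    (fun k ↦ by split_ifs <;> simp [poissonWeight_nonneg hm])
    (fun k ↦ by split_ifs <;> simp [poissonWeight_nonneg hm])

-- Chernoff bound; a negative `x` turns the condition `x * c ≤ x * k` into a lower tail.
lemma tsum_ite_poissonWeight_le_exp {m : ℝ} (hm : 0 ≤ m) (x c : ℝ) (P : ℕ → Prop)
    [DecidablePred P] (hP : ∀ k, P k → x * c ≤ x * k) :
    ∑' k, (if P k then poissonWeight m k else 0) ≤ exp (m * (exp x - 1) - x * c) := by
  rw [sub_eq_add_neg, exp_add]
  refine hasSum_le (fun k ↦ ?_) (summable_ite_poissonWeight hm P).hasSum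
    ((hasSum_exp_mul_poissonWeight m x).mul_right (exp (-(x * c))))
  split_ifs with hk
  · have h1 : 1 ≤ exp (x * k) * exp (-(x * c)) := by
      rw [← exp_add]; exact one_le_exp (by linarith [hP k hk])
    nlinarith [poissonWeight_nonneg hm k]
  · have := poissonWeight_nonneg hm k
    positivity

lemma one_sub_mul_exp_le {θ : ℝ} (h0 : 0 ≤ θ) (h1 : θ ≤ 1) :
    (1 - θ) * exp θ ≤ 1 - θ ^ 2 / 2 := by
  -- `exp θ ≤ 1 + θ + θ²/2 + 2θ³/9` on `[0, 1]`
  have h := exp_bound' h0 h1 (n := 3) (by norm_num)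
  norm_num [Finset.sum_range_succ, Nat.factorial] at h
  nlinarith [mul_le_mul_of_nonneg_left h (sub_nonneg.2 h1), pow_nonneg h0 3, pow_nonneg h0 4]

lemma exp_neg_le_one_sub_add_sq {θ : ℝ} (hθ : 0 ≤ θ) : exp (-θ) ≤ 1 - θ + θ ^ 2 / 2 := by
  -- `(1 + θ + θ²/2) (1 - θ + θ²/2) = 1 + θ⁴/4`
  have h := quadratic_le_exp_of_nonneg hθ
  have hpos : 0 ≤ 1 - θ + θ ^ 2 / 2 := by nlinarith
  rw [exp_neg, inv_le_iff_one_le_mul₀ (exp_pos θ)]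
  nlinarith [mul_le_mul_of_nonneg_right h hpos, pow_nonneg hθ 4]

lemma poissonWeight_upperTail_le {m t : ℝ} (hm : 0 ≤ m) (ht : 0 < t) :
    ∑' k : ℕ, (if m + t ≤ k then poissonWeight m k else 0) ≤ exp (-(t ^ 2 / (2 * (m + t)))) := by
  have hmt : 0 < m + t := by linarith
  set θ := t / (m + t) with hθ
  have hθt : θ * (m + t) = t := div_mul_cancel₀ t hmt.ne'
  have hθ0 : 0 ≤ θ := by positivity
  have hθ1 : θ ≤ 1 := div_le_one_of_le₀ (by linarith) hmt.le
  refine (tsum_ite_poissonWeight_le_exp hm θ (m + t) _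
    fun k hk ↦ mul_le_mul_of_nonneg_left hk hθ0).trans (exp_le_exp.2 ?_)
  have key : m * exp θ ≤ (m + t) * (1 - θ ^ 2 / 2) := by
    have hm' : m * exp θ = (m + t) * ((1 - θ) * exp θ) := by linear_combination exp θ * hθt
    rw [hm']
    exact mul_le_mul_of_nonneg_left (one_sub_mul_exp_le hθ0 hθ1) hmt.le
  have hsq : t ^ 2 / (2 * (m + t)) = (m + t) * θ ^ 2 / 2 := by
    rw [hθ]; field_simp
  rw [hsq]
  nlinarith

lemma poissonWeight_lowerTail_le {m t : ℝ} (hm : 0 < m) (ht : 0 ≤ t) :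
    ∑' k : ℕ, (if k ≤ m - t then poissonWeight m k else 0) ≤ exp (-(t ^ 2 / (2 * m))) := by
  set θ := t / m with hθ
  have hθ0 : 0 ≤ θ := by positivity
  have hθm : θ * m = t := div_mul_cancel₀ t hm.ne'
  refine (tsum_ite_poissonWeight_le_exp hm.le (-θ) (m - t) _
    fun k hk ↦ by nlinarith).trans (exp_le_exp.2 ?_)
  have hsq : t ^ 2 / (2 * m) = m * θ ^ 2 / 2 := by
    rw [hθ]; field_simp
  rw [hsq]
  nlinarith [mul_le_mul_of_nonneg_left (exp_neg_le_one_sub_add_sq hθ0) hm.le]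

lemma poissonWeight_deviation_le {m t : ℝ} (hm : 0 < m) (ht : 0 < t) :
    ∑' k : ℕ, (if t ≤ |(k : ℝ) - m| then poissonWeight m k else 0)
      ≤ 2 * exp (-(t ^ 2 / (2 * (m + t)))) := by
  have hsplit (k : ℕ) : (if t ≤ |(k : ℝ) - m| then poissonWeight m k else 0)
      ≤ (if m + t ≤ k then poissonWeight m k else 0)
        + (if k ≤ m - t then poissonWeight m k else 0) := by
    have := poissonWeight_nonneg hm.le k
    have hcases : t ≤ |(k : ℝ) - m| → m + t ≤ k ∨ k ≤ m - t := by
      rw [le_abs']; rintro (h | h) <;> [right; left] <;> linarith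
    split_ifs <;> grind
  have hlower : exp (-(t ^ 2 / (2 * m))) ≤ exp (-(t ^ 2 / (2 * (m + t)))) := by
    gcongr; linarith
  calc _ ≤ ∑' k : ℕ, ((if m + t ≤ k then poissonWeight m k else 0)
        + (if k ≤ m - t then poissonWeight m k else 0)) :=
        (summable_ite_poissonWeight hm.le _).tsum_le_tsum hsplit
          ((summable_ite_poissonWeight hm.le _).add (summable_ite_poissonWeight hm.le _))
    _ ≤ _ := by
      rw [(summable_ite_poissonWeight hm.le _).tsum_add (summable_ite_poissonWeight hm.le _)]
      linarith [poissonWeight_upperTail_le hm.le ht, poissonWeight_lowerTail_le hm ht.le]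

lemma one_sub_tsum_ite_poissonWeight_le {m : ℝ} (hm : 0 ≤ m) (P Q : ℕ → Prop)
    [DecidablePred P] [DecidablePred Q] (hPQ : ∀ k, ¬P k → Q k) :
    1 - ∑' k, (if P k then poissonWeight m k else 0)
      ≤ ∑' k, (if Q k then poissonWeight m k else 0) := by
  have h := hasSum_le (fun k ↦ ?_) (hasSum_poissonWeight m)
    ((summable_ite_poissonWeight hm P).hasSum.add (summable_ite_poissonWeight hm Q).hasSum)
  · linarith
  · have := poissonWeight_nonneg hm k
    by_cases hk : P k
    · simp only [hk, if_true]; split_ifs <;> linarith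
    · simp [hk, hPQ k hk]

lemma exp_neg_mem_Icc_of_abs_sub_log_le {p c x : ℝ} (hp : 0 < p) (hc : 0 < c)
    (h : |x - log (1 / p)| ≤ log c) : exp (-x) ∈ Set.Icc (p / c) (c * p) := by
  have hpc : exp (-log (1 / p) - log c) = p / c := by
    rw [exp_sub, exp_neg, exp_log (by positivity), exp_log hc, one_div, inv_inv]
  have hcp : exp (-log (1 / p) + log c) = c * p := by
    rw [exp_add, exp_neg, exp_log (by positivity), exp_log hc, one_div, inv_inv, mul_comm]
  obtain ⟨h₁, h₂⟩ := abs_le.1 h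
  exact ⟨hpc ▸ exp_le_exp.2 (by linarith), hcp ▸ exp_le_exp.2 (by linarith)⟩

theorem tpa_estimate_accuracy_general (r : ℕ) (hr : 1 ≤ r) (p ζ δ' L : ℝ)
    (hp0 : 0 < p) (hp1 : p < 1) (hζ : 0 < ζ) (hδ0 : 0 < δ')
    (hL : L = Real.log (1 / p))
    (hrge : 2 * (L + Real.log (1 + ζ)) * Real.log (1 / δ') / (Real.log (1 + ζ)) ^ 2
      ≤ (r : ℝ)) :
    (∑' k : ℕ, if Real.log (1 + ζ) ≤ |(k : ℝ) / r - L| then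
        Real.exp (-((r : ℝ) * L)) * ((r : ℝ) * L) ^ k / k.factorial else 0) ≤ 2 * δ' ∧
    1 - 2 * δ' ≤ (∑' k : ℕ, if p / (1 + ζ) ≤ Real.exp (-((k : ℝ) / r)) ∧
        Real.exp (-((k : ℝ) / r)) ≤ (1 + ζ) * p then
        Real.exp (-((r : ℝ) * L)) * ((r : ℝ) * L) ^ k / k.factorial else 0) := by
  set a := log (1 + ζ)
  have hr0 : (0 : ℝ) < r := by exact_mod_cast hr
  have ha : 0 < a := log_pos (by linarith)
  have hL0 : 0 < L := hL ▸ log_pos ((one_lt_div hp0).2 hp1)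
  have hevent (k : ℕ) : a ≤ |(k : ℝ) / r - L| ↔ r * a ≤ |(k : ℝ) - r * L| := by
    rw [← mul_le_mul_iff_of_pos_left hr0, ← abs_of_pos hr0, ← abs_mul, abs_of_pos hr0,
      mul_sub, mul_div_cancel₀ _ hr0.ne']
  have hδ : exp (-((r * a) ^ 2 / (2 * (r * L + r * a)))) ≤ δ' := by
    have hexp : log (1 / δ') ≤ (r * a) ^ 2 / (2 * (r * L + r * a)) := by
      rw [div_le_iff₀ (by positivity)] at hrge
      rw [le_div_iff₀ (by positivity)]
      nlinarith
    calc _ ≤ exp (-log (1 / δ')) := exp_le_exp.2 (by linarith)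
      _ = δ' := by rw [one_div, log_inv, neg_neg, exp_log hδ0]
  have hdev := (poissonWeight_deviation_le (mul_pos hr0 hL0) (mul_pos hr0 ha)).trans
    (mul_le_mul_of_nonneg_left hδ zero_le_two)
  simp_rw [← hevent] at hdev
  refine ⟨hdev, (sub_le_sub_left hdev 1).trans
    (one_sub_tsum_ite_poissonWeight_le (by positivity) _ _ fun k hk ↦ ?_)⟩
  exact exp_neg_mem_Icc_of_abs_sub_log_le hp0 (by linarith) (hL ▸ (not_le.1 hk).le)

/-- Accuracy of the TPA estimate: if `λ` is the average of `r` i.i.d. `Poisson(L)`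
variables (so `r·λ ∼ Poisson(rL)`) with `L = log(1/p)` and
`r ≥ 2(L + log(1+ζ))·log(1/δ')/log²(1+ζ)`, then `Pr(|λ − L| ≥ log(1+ζ)) ≤ 2δ'`,
and with probability `≥ 1 − 2δ'` the estimate `e^{−λ}` is a `(1+ζ)`-factor
approximation of `p`. -/
theorem tpa_estimate_accuracy (r : ℕ) (hr : 1 ≤ r) (p ζ δ' L : ℝ)
    (hp0 : 0 < p) (hp1 : p < 1) (hζ : 0 < ζ) (hδ0 : 0 < δ') (hδ1 : δ' < 1)
    (hL : L = Real.log (1 / p))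
    (hrge : 2 * (L + Real.log (1 + ζ)) * Real.log (1 / δ') / (Real.log (1 + ζ)) ^ 2
      ≤ (r : ℝ)) :
    (∑' k : ℕ, if Real.log (1 + ζ) ≤ |(k : ℝ) / r - L| then
        Real.exp (-((r : ℝ) * L)) * ((r : ℝ) * L) ^ k / k.factorial else 0) ≤ 2 * δ' ∧
    1 - 2 * δ' ≤ (∑' k : ℕ, if p / (1 + ζ) ≤ Real.exp (-((k : ℝ) / r)) ∧
        Real.exp (-((k : ℝ) / r)) ≤ (1 + ζ) * p then
        Real.exp (-((r : ℝ) * L)) * ((r : ℝ) * L) ^ k / k.factorial else 0) :=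
  tpa_estimate_accuracy_general r hr p ζ δ' L hp0 hp1 hζ hδ0 hL hrge
end
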